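/- arXiv:1402.2641 — 2 statements merged into one kernel-verified Lean document; each statement's English description precedes it below -/
import Mathlib

section
/- Let G be a graph containing no induced 4-wheel and no induced C_m* for any m ≥ 4, let C = v_1...v_n v_1 (n ≥ 4) be a chordless cycle of G, and let v be a vertex not on C whose neighbors on C induce a chordless path containing v_i as an interior vertex (i.e., v is adjacent to v_{i-1}, v_i, v_{i+1}). Then v is adjacent to every vertex o with N_G(o) ∩ V(C) = {v_i}, provided the neighbors of any vertex outside C on C always induce a chordless path (which holds under the forbidden-subgraph hypotheses of the paper: no induced G_1, G_2, G_3, G_4, domino, k-wheel (k ≥ 4), or C_k* (k ≥ 4)). -/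
open SimpleGraph

/-- The circle (of circumference 1), as the additive circle `ℝ / ℤ`. -/
abbrev Circ : Type := AddCircle (1 : ℝ)

/-- The closed arc of the circle obtained by projecting the real interval `[p.1, p.2]`. -/
def arcIcc (p : ℝ × ℝ) : Set Circ := (fun x : ℝ => (x : Circ)) '' Set.Icc p.1 p.2

/-- `M` is a circular-arc model of the graph `G`: each vertex gets a (nonempty, closed) arc,
and two distinct vertices are adjacent iff their arcs intersect. -/
def IsCAModel {V : Type*} (G : SimpleGraph V) (M : V → ℝ × ℝ) : Prop :=
  (∀ v, (M v).1 ≤ (M v).2) ∧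
  ∀ u v : V, u ≠ v → (G.Adj u v ↔ (arcIcc (M u) ∩ arcIcc (M v)).Nonempty)

/-- A circular-arc graph: the intersection graph of a finite set of arcs on a circle. -/
def IsCircularArcGraph {V : Type*} [Finite V] (G : SimpleGraph V) : Prop :=
  ∃ M : V → ℝ × ℝ, IsCAModel G M

/-- A normal Helly circular-arc graph: the intersection graph of a finite set of arcs
on a circle, no three of which together cover the circle. -/
def IsNHCAGraph {V : Type*} [Finite V] (G : SimpleGraph V) : Prop :=
  ∃ M : V → ℝ × ℝ, IsCAModel G M ∧
    ∀ u v w : V, u ≠ v → u ≠ w → v ≠ w →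
      arcIcc (M u) ∪ arcIcc (M v) ∪ arcIcc (M w) ≠ Set.univ

/-- `M` is an interval model of `G`: closed real intervals, adjacency iff intersection. -/
def IsIntervalModel {V : Type*} (G : SimpleGraph V) (M : V → ℝ × ℝ) : Prop :=
  (∀ v, (M v).1 ≤ (M v).2) ∧
  ∀ u v : V, u ≠ v →
    (G.Adj u v ↔ (Set.Icc (M u).1 (M u).2 ∩ Set.Icc (M v).1 (M v).2).Nonempty)

/-- An interval graph: the intersection graph of a finite set of intervals on a line. -/
def IsIntervalGraph {V : Type*} [Finite V] (G : SimpleGraph V) : Prop :=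
  ∃ M : V → ℝ × ℝ, IsIntervalModel G M

/-- The chordless path `P_m` on `m` vertices. -/
def pathG (m : ℕ) : SimpleGraph (Fin m) :=
  SimpleGraph.fromRel (fun i j => i.val + 1 = j.val)

/-- The chordless cycle `C_n` on `n` vertices (intended for `n ≥ 3`). -/
def cycG (n : ℕ) : SimpleGraph (Fin n) :=
  SimpleGraph.fromRel (fun i j => (i.val + 1) % n = j.val)

/-- `G` contains an induced copy of `H`. -/
def HasInduced {W V : Type*} (H : SimpleGraph W) (G : SimpleGraph V) : Prop :=
  Nonempty (H ↪g G)

/-- Add one isolated vertex to a graph. -/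
def addIsolated {V : Type*} (G : SimpleGraph V) : SimpleGraph (Option V) :=
  SimpleGraph.fromRel (fun u v => ∃ a b, u = some a ∧ v = some b ∧ G.Adj a b)

/-- Add one universal vertex to a graph. -/
def addUniversal {V : Type*} (G : SimpleGraph V) : SimpleGraph (Option V) :=
  SimpleGraph.fromRel (fun u v => (∃ a b, u = some a ∧ v = some b ∧ G.Adj a b) ∨ u = none)

/-- `C_k^*`: the chordless cycle `C_k` plus an isolated vertex. -/
def cycStar (k : ℕ) : SimpleGraph (Option (Fin k)) := addIsolated (cycG k)

/-- The `k`-wheel: the chordless cycle `C_k` plus a universal vertex. -/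
def wheelG (k : ℕ) : SimpleGraph (Option (Fin k)) := addUniversal (cycG k)

/-- The bipartite claw: `K_{1,3}` with every edge subdivided once. -/
def bipartiteClaw : SimpleGraph (Fin 7) :=
  SimpleGraph.fromEdgeSet {s(0,1), s(0,2), s(0,3), s(1,4), s(2,5), s(3,6)}

/-- The umbrella: a path `0-1-2-3-4`, a hub `5` adjacent to all path vertices,
and a vertex `6` adjacent only to the middle vertex `2` of the path. -/
def umbrella : SimpleGraph (Fin 7) :=
  SimpleGraph.fromEdgeSet
    {s(0,1), s(1,2), s(2,3), s(3,4), s(5,0), s(5,1), s(5,2), s(5,3), s(5,4), s(6,2)}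

/-- The net (= 2-net): a triangle with one pendant vertex at each corner. -/
def netG : SimpleGraph (Fin 6) :=
  SimpleGraph.fromEdgeSet {s(0,1), s(1,2), s(2,0), s(3,0), s(4,1), s(5,2)}

/-- The tent (= 3-tent = 3-sun). -/
def tentG : SimpleGraph (Fin 6) :=
  SimpleGraph.fromEdgeSet
    {s(0,1), s(1,2), s(2,0), s(3,0), s(3,1), s(4,1), s(4,2), s(5,2), s(5,0)}

/-- The `k`-net (for `k ≥ 2`), with `k + 4` vertices: a chordless path
`p_0, …, p_k` (indices `0, …, k`), a vertex `q = k+1` adjacent to `p_0, …, p_{k-1}`,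
a pendant `r = k+2` on `q`, and a pendant `t = k+3` on `p_0`. -/
def kNet (k : ℕ) : SimpleGraph (Fin (k + 4)) :=
  SimpleGraph.fromRel (fun a b =>
    (a.val + 1 = b.val ∧ b.val ≤ k) ∨
    (a.val = k + 1 ∧ b.val + 1 ≤ k) ∨
    (a.val = k + 1 ∧ b.val = k + 2) ∨
    (a.val = 0 ∧ b.val = k + 3))

/-- The `k`-tent (for `k ≥ 3`), with `k + 3` vertices: a chordless path
`p_0, …, p_{k-3}` (indices `0, …, k-3`), a vertex `a = k-2` adjacent to `p_0`,
a vertex `q = k-1` adjacent to `a` and to `p_0, …, p_{k-4}`, a pendant `r = k` on `q`,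
a vertex `z = k+1` adjacent to `a` and `q`, and a hub `h = k+2` adjacent to every
vertex except `z`.  For `k = 3` this is the `3`-sun. -/
def kTent (k : ℕ) : SimpleGraph (Fin (k + 3)) :=
  SimpleGraph.fromRel (fun x y =>
    (x.val + 1 = y.val ∧ y.val + 3 ≤ k) ∨
    (x.val + 2 = k ∧ y.val = 0) ∨
    (x.val + 2 = k ∧ y.val + 1 = k) ∨
    (x.val + 1 = k ∧ y.val + 4 ≤ k) ∨
    (x.val = k + 1 ∧ (y.val + 2 = k ∨ y.val + 1 = k)) ∨
    (x.val + 1 = k ∧ y.val = k) ∨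
    (x.val = k + 2 ∧ y.val ≤ k))

/-- The Trotter–Moore graph `G_1` (as described in the source): vertices `x=0, y=1, z=2,
w₁=3, w₂=4` with edges `xy`, `yz`, and `w₁, w₂` each adjacent to `x`, `y`, `z`. -/
def G1 : SimpleGraph (Fin 5) :=
  SimpleGraph.fromEdgeSet
    {s(0,1), s(1,2), s(3,0), s(3,1), s(3,2), s(4,0), s(4,1), s(4,2)}

/-- The Trotter–Moore graph `G_2`: a four-cycle `0-1-2-3`, a vertex `4` adjacent to `0`,
a vertex `5` adjacent to `2`, and the edge `4-5`. -/
def G2 : SimpleGraph (Fin 6) :=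
  SimpleGraph.fromEdgeSet {s(0,1), s(1,2), s(2,3), s(3,0), s(4,0), s(5,2), s(4,5)}

/-- The Trotter–Moore graph `G_3`: a five-cycle `0-1-2-3-4` plus a vertex `5`
adjacent to `0`, `2` and `3`. -/
def G3 : SimpleGraph (Fin 6) :=
  SimpleGraph.fromEdgeSet {s(0,1), s(1,2), s(2,3), s(3,4), s(4,0), s(5,0), s(5,2), s(5,3)}

/-- The Trotter–Moore graph `G_4`: a five-cycle `0-1-2-3-4`, a vertex `5` adjacent to `0`,
a vertex `6` adjacent to `2`, and the edge `5-6`. -/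
def G4 : SimpleGraph (Fin 7) :=
  SimpleGraph.fromEdgeSet
    {s(0,1), s(1,2), s(2,3), s(3,4), s(4,0), s(5,0), s(6,2), s(5,6)}

/-- The domino: two four-cycles sharing an edge (`C_6` plus one long chord). -/
def dominoG : SimpleGraph (Fin 6) :=
  SimpleGraph.fromEdgeSet {s(0,1), s(1,2), s(2,3), s(3,4), s(4,5), s(5,0), s(0,3)}

/-- The complement of the chordless six-cycle. -/
def C6bar : SimpleGraph (Fin 6) := (cycG 6)ᶜ

/-- Gimbel's graph `F_1`: a chordless path `0-1-2-3-4` together with a vertex `5`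
whose only neighbor is the middle vertex `2` of the path. -/
def F1 : SimpleGraph (Fin 6) :=
  SimpleGraph.fromEdgeSet {s(0,1), s(1,2), s(2,3), s(3,4), s(5,2)}

/-- The set `A_i` with respect to a chordless cycle `c : Fin n → V`:
vertices off the cycle adjacent to `v_{i-1}` and `v_i` having a neighbor `w`
adjacent to `v_i` but not to `v_{i-1}`. -/
def Aset {V : Type*} {n : ℕ} [NeZero n] (G : SimpleGraph V) (c : Fin n → V) (i : Fin n) : Set V :=
  {v | v ∉ Set.range c ∧ G.Adj v (c (i - 1)) ∧ G.Adj v (c i) ∧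
    ∃ w, G.Adj v w ∧ G.Adj w (c i) ∧ ¬ G.Adj w (c (i - 1))}

/-- The set `B_i`: vertices off the cycle adjacent to `v_i` and `v_{i+1}` having a
neighbor `w` adjacent to `v_i` but not to `v_{i+1}`. -/
def Bset {V : Type*} {n : ℕ} [NeZero n] (G : SimpleGraph V) (c : Fin n → V) (i : Fin n) : Set V :=
  {v | v ∉ Set.range c ∧ G.Adj v (c i) ∧ G.Adj v (c (i + 1)) ∧
    ∃ w, G.Adj v w ∧ G.Adj w (c i) ∧ ¬ G.Adj w (c (i + 1))}

/-- The set `O_i`: vertices off the cycle whose unique neighbor on the cycle is `v_i`. -/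
def Oset {V : Type*} {n : ℕ} (G : SimpleGraph V) (c : Fin n → V) (i : Fin n) : Set V :=
  {v | v ∉ Set.range c ∧ ∀ j, G.Adj v (c j) ↔ j = i}

/-- The set `T_i`: vertices off the cycle whose neighbors on the cycle are exactly
`v_i` and `v_{i+1}`, and which belong to neither `B_i` nor `A_{i+1}`. -/
def Tset {V : Type*} {n : ℕ} [NeZero n] (G : SimpleGraph V) (c : Fin n → V) (i : Fin n) : Set V :=
  {v | v ∉ Set.range c ∧ (∀ j, G.Adj v (c j) ↔ (j = i ∨ j = i + 1)) ∧
    v ∉ Bset G c i ∪ Aset G c (i + 1)}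


/-!
A cycle is not a path, so `v` misses some vertex of `C`. Take a maximal run
`c (i + s + 1), …, c (i + t - 1)` of non-neighbours of `v`, with offsets counted from `i`;
since `v` sees `c (i - 1)`, `c i` and `c (i + 1)`, we get `1 ≤ s < t ≤ n - 1`. Then `v` and the
arc `c (i + s), …, c (i + t)` form a chordless cycle of length `t - s + 2 ≥ 4` avoiding `c i`,
and a vertex of `O_i` not adjacent to `v` is isolated from it: an induced `C_m^*`.
-/

open Fin.NatCast Fin.CommRing

lemma Nat.exists_maximal_gap {Q : ℕ → Prop} {a b e : ℕ} (ha : Q a) (hb : Q b) (hae : a ≤ e)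
    (heb : e ≤ b) (he : ¬ Q e) :
    ∃ s t, a ≤ s ∧ s < e ∧ e < t ∧ t ≤ b ∧ Q s ∧ Q t ∧ ∀ x, s < x → x < t → ¬ Q x := by
  classical
  have hex : ∃ x, e ≤ x ∧ Q x := ⟨b, heb, hb⟩
  obtain ⟨het, ht⟩ := Nat.find_spec hex
  have hs : Q (Nat.findGreatest Q e) := Nat.findGreatest_spec hae ha
  have hse : Nat.findGreatest Q e ≤ e := Nat.findGreatest_le e
  refine ⟨Nat.findGreatest Q e, Nat.find hex, Nat.le_findGreatest hae ha,
    lt_of_le_of_ne hse (fun h => he (h ▸ hs)), lt_of_le_of_ne het (fun h => he (h ▸ ht)),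
    Nat.find_min' hex ⟨heb, hb⟩, hs, ht, fun x hsx hxt hx => ?_⟩
  rcases le_or_gt x e with hxe | hex'
  · exact Nat.findGreatest_is_greatest hsx hxe hx
  · exact Nat.find_min hex hxt ⟨hex'.le, hx⟩

lemma cycG_adj_iff {n : ℕ} [NeZero n] {x y : Fin n} :
    (cycG n).Adj x y ↔ x ≠ y ∧ (x + 1 = y ∨ y + 1 = x) := by
  have hsucc : ∀ a b : Fin n, (a.val + 1) % n = b.val ↔ a + 1 = b := fun a b => by
    rw [Fin.ext_iff, Fin.val_add, Fin.val_one', Nat.add_mod_mod]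
  simp only [cycG, SimpleGraph.fromRel_adj, hsucc]

lemma pathG_adj_iff {m : ℕ} {x y : Fin m} :
    (pathG m).Adj x y ↔ x ≠ y ∧ (x.val + 1 = y.val ∨ y.val + 1 = x.val) :=
  SimpleGraph.fromRel_adj _ _ _

def cycGRotate {n : ℕ} [NeZero n] (a : Fin n) : cycG n ≃g cycG n where
  toEquiv := Equiv.addLeft a
  map_rel_iff' {x y} := by
    simp only [Equiv.coe_addLeft, cycG_adj_iff, ne_eq, add_right_inj, add_assoc]

def pathGToCycG {k n : ℕ} (h : k + 2 ≤ n) : pathG (k + 1) ↪g cycG n where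
  toEmbedding := Fin.castLEEmb (by omega)
  map_rel_iff' {x y} := by
    have hx := x.isLt
    have hy := y.isLt
    simp only [Fin.castLEEmb_apply, cycG, pathG, SimpleGraph.fromRel_adj, ne_eq, Fin.ext_iff,
      Fin.val_castLE, Nat.mod_eq_of_lt (show x.val + 1 < n by omega),
      Nat.mod_eq_of_lt (show y.val + 1 < n by omega)]

def cycArc {V : Type*} {G : SimpleGraph V} {n k : ℕ} [NeZero n] (c : cycG n ↪g G) (a : Fin n)
    (h : k + 2 ≤ n) : pathG (k + 1) ↪g G :=
  (pathGToCycG h).trans ((cycGRotate a).toEmbedding.trans c)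

lemma cycArc_apply {V : Type*} {G : SimpleGraph V} {n k : ℕ} [NeZero n] (c : cycG n ↪g G)
    (a : Fin n) (h : k + 2 ≤ n) (l : Fin (k + 1)) : cycArc c a h l = c (a + ((l : ℕ) : Fin n)) := by
  have hl : (Fin.castLE (by omega) l : Fin n) = ((l : ℕ) : Fin n) :=
    Fin.ext (by rw [Fin.val_castLE, Fin.val_natCast, Nat.mod_eq_of_lt (by omega)])
  simp [cycArc, pathGToCycG, cycGRotate, hl]

lemma cycG_adj_castSucc_iff {k : ℕ} {x y : Fin (k + 1)} :
    (cycG (k + 2)).Adj x.castSucc y.castSucc ↔ (pathG (k + 1)).Adj x y :=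
  (pathGToCycG le_rfl).map_rel_iff

lemma cycG_adj_last_castSucc_iff {k : ℕ} {y : Fin (k + 1)} :
    (cycG (k + 2)).Adj (Fin.last (k + 1)) y.castSucc ↔ y.val = 0 ∨ y.val = k := by
  have hy := y.isLt
  simp only [cycG, SimpleGraph.fromRel_adj, ne_eq, Fin.ext_iff, Fin.val_last, Fin.val_castSucc,
    Nat.mod_self, Nat.mod_eq_of_lt (show y.val + 1 < k + 2 by omega)]
  omega

section closePath

variable {V : Type*} {G : SimpleGraph V} {k : ℕ} (p : pathG (k + 1) ↪g G) (w : V)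
  (hw : w ∉ Set.range p) (hwp : ∀ j, G.Adj w (p j) ↔ j.val = 0 ∨ j.val = k)

def closePath : cycG (k + 2) ↪g G where
  toFun := Fin.lastCases w p
  inj' x y hxy := by
    induction x using Fin.lastCases <;> induction y using Fin.lastCases <;>
      simp only [Fin.lastCases_last, Fin.lastCases_castSucc] at hxy
    · rfl
    · exact (hw ⟨_, hxy.symm⟩).elim
    · exact (hw ⟨_, hxy⟩).elim
    · rw [p.injective hxy]
  map_rel_iff' {x y} := by
    change G.Adj (Fin.lastCases w p x) (Fin.lastCases w p y) ↔ _
    induction x using Fin.lastCases <;> induction y using Fin.lastCases <;>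
      simp only [Fin.lastCases_last, Fin.lastCases_castSucc, SimpleGraph.irrefl, hwp,
        cycG_adj_castSucc_iff, cycG_adj_last_castSucc_iff, p.map_rel_iff]
    rw [G.adj_comm, (cycG (k + 2)).adj_comm, hwp, cycG_adj_last_castSucc_iff]

@[simp]
lemma closePath_last : closePath p w hw hwp (Fin.last (k + 1)) = w :=
  Fin.lastCases_last (motive := fun _ => V)

@[simp]
lemma closePath_castSucc (j : Fin (k + 1)) : closePath p w hw hwp j.castSucc = p j :=
  Fin.lastCases_castSucc (motive := fun _ => V) j

end closePath

def addIsolatedEmbedding {W V : Type*} {H : SimpleGraph W} {G : SimpleGraph V} (f : H ↪g G)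
    (o : V) (ho : o ∉ Set.range f) (hadj : ∀ x, ¬ G.Adj o (f x)) : addIsolated H ↪g G where
  toFun x := x.elim o f
  inj' := by
    rintro (_ | x) (_ | y) hxy <;> simp only [Option.elim_none, Option.elim_some] at hxy
    · rfl
    · exact (ho ⟨y, hxy.symm⟩).elim
    · exact (ho ⟨x, hxy⟩).elim
    · rw [f.injective hxy]
  map_rel_iff' {x y} := by
    change G.Adj (x.elim o f) (y.elim o f) ↔ _
    rcases x with _ | x <;> rcases y with _ | y <;>
      simp [addIsolated, SimpleGraph.fromRel_adj, hadj, G.adj_comm _ o]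
    exact ⟨fun h => ⟨h.ne, Or.inl h⟩, fun ⟨_, h⟩ => h.elim id .symm⟩

lemma range_pathG_ne_range_cycG {V : Type*} {G : SimpleGraph V} {m n : ℕ} [NeZero n]
    (hn : 3 ≤ n) (p : pathG m ↪g G) (c : cycG n ↪g G) : Set.range p ≠ Set.range c := by
  intro hpc
  have hcp : ∀ j, c j ∈ Set.range p := fun j => by rw [hpc]; exact Set.mem_range_self j
  obtain ⟨z, -⟩ := hcp 0
  obtain ⟨j, hj⟩ : p ⟨0, z.pos⟩ ∈ Set.range c := hpc ▸ Set.mem_range_self _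
  have hnbr : ∀ x, (cycG n).Adj j x → ∃ y : Fin m, y.val = 1 ∧ p y = c x := by
    intro x hjx
    obtain ⟨y, hy⟩ := hcp x
    obtain ⟨-, h⟩ := pathG_adj_iff.mp (p.map_rel_iff.mp (hj ▸ hy ▸ c.map_rel_iff.mpr hjx))
    exact ⟨y, by simp only at h; omega, hy⟩
  have h10 : (1 : Fin n) ≠ 0 := by rw [Ne, Fin.one_eq_zero_iff]; omega
  -- `p ⟨0, _⟩` has a single neighbour on the path, but its two cycle neighbours lie on it
  obtain ⟨y₁, hy₁, hp₁⟩ :=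
    hnbr (j + 1) (cycG_adj_iff.mpr ⟨fun h => h10 (add_eq_left.mp h.symm), Or.inl rfl⟩)
  obtain ⟨y₂, hy₂, hp₂⟩ :=
    hnbr (j - 1)
      (cycG_adj_iff.mpr ⟨fun h => h10 (sub_eq_self.mp h.symm), Or.inr (sub_add_cancel j 1)⟩)
  have h : j + 1 = j - 1 := c.injective (hp₁ ▸ hp₂ ▸ congrArg p (Fin.ext (hy₁.trans hy₂.symm)))
  have h20 : (1 : Fin n) + 1 = 0 := by linear_combination h
  have htwo : ((1 : Fin n) + 1).val = 2 := by
    rw [Fin.val_add, Fin.val_one', Nat.mod_eq_of_lt (by omega : 1 < n),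
      Nat.mod_eq_of_lt (by omega)]
  simp [h20] at htwo

lemma exists_cycG_embedding_avoiding {V : Type*} {G : SimpleGraph V} {n : ℕ} [NeZero n]
    (c : cycG n ↪g G) {v : V} (hv : v ∉ Set.range c) {i j : Fin n}
    (h1 : G.Adj v (c (i - 1))) (h2 : G.Adj v (c i)) (h3 : G.Adj v (c (i + 1)))
    (hj : ¬ G.Adj v (c j)) :
    ∃ m, 4 ≤ m ∧ ∃ f : cycG m ↪g G, ∀ x, f x = v ∨ ∃ l ≠ i, f x = c l := by
  set Q : ℕ → Prop := fun e => G.Adj v (c (i + e))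
  have hQ1 : Q 1 := by simpa [Q] using h3
  have hQn : Q (n - 1) := by
    simpa [Q, Nat.cast_pred (NeZero.pos n), sub_eq_add_neg] using h1
  have hQe : ¬ Q (j - i).val := by simpa [Q] using hj
  have he0 : (j - i).val ≠ 0 := fun h => hj (by rwa [sub_eq_zero.mp (Fin.val_eq_zero_iff.mp h)])
  have hen : (j - i).val < n := (j - i).isLt
  have he1 : (j - i).val ≠ 1 := fun h => hQe (h ▸ hQ1)
  have hen1 : (j - i).val ≠ n - 1 := fun h => hQe (h ▸ hQn)
  obtain ⟨s, t, h1s, hse, het, htn, hs, ht, hgap⟩ :=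
    Nat.exists_maximal_gap hQ1 hQn (by omega) (by omega) hQe
  let arc := cycArc c (i + (s : Fin n)) (k := t - s) (by omega)
  have harc : ∀ l : Fin (t - s + 1), arc l = c (i + ((s + l : ℕ) : Fin n)) := fun l => by
    rw [cycArc_apply, Nat.cast_add, add_assoc]
  have hv_arc : v ∉ Set.range arc := fun ⟨l, hl⟩ => hv ⟨_, (harc l ▸ hl)⟩
  have hadj_arc : ∀ l, G.Adj v (arc l) ↔ l.val = 0 ∨ l.val = t - s := by
    intro l
    rw [harc]
    constructor
    · intro h
      by_contra hl
      exact hgap (s + l) (by omega) (by omega) h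
    · rintro (hl | hl)
      · simpa [hl] using hs
      · simpa [hl, show s + (t - s) = t by omega] using ht
  refine ⟨t - s + 2, by omega, closePath arc v hv_arc hadj_arc,
    Fin.forall_fin_succ'.mpr ⟨fun l => Or.inr ⟨_, ?_, by rw [closePath_castSucc, harc]⟩,
      Or.inl (closePath_last ..)⟩⟩
  intro h
  have hdvd := Fin.natCast_eq_zero.mp (add_eq_left.mp h)
  have := Nat.le_of_dvd (by omega) hdvd
  omega

theorem stmt13_general {V : Type*} (G : SimpleGraph V)
    (hstar : ∀ m, 4 ≤ m → ¬ HasInduced (cycStar m) G)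
    {n : ℕ} [NeZero n] (hn : 4 ≤ n) (c : cycG n ↪g G)
    (hpath : ∀ u ∉ Set.range ⇑c, (∃ j, G.Adj u (c j)) →
      ∃ m, ∃ p : pathG m ↪g G,
        Set.range ⇑p = {x | x ∈ Set.range ⇑c ∧ G.Adj u x})
    (i : Fin n) (v : V) (hv : v ∉ Set.range ⇑c)
    (h1 : G.Adj v (c (i - 1))) (h2 : G.Adj v (c i)) (h3 : G.Adj v (c (i + 1)))
    (o : V) (ho : o ∈ Oset G ⇑c i) :
    G.Adj v o := by
  by_contra hvo
  obtain ⟨hoc, hoi⟩ := ho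
  obtain ⟨j, hj⟩ : ∃ j, ¬ G.Adj v (c j) := by
    by_contra! hall
    obtain ⟨m, p, hp⟩ := hpath v hv ⟨i, h2⟩
    refine range_pathG_ne_range_cycG (by omega) p c (hp.trans ?_)
    exact Set.sep_eq_self_iff_mem_true.mpr (by rintro _ ⟨j, rfl⟩; exact hall j)
  have hov : o ≠ v := by
    rintro rfl
    have h10 : (1 : Fin n) ≠ 0 := by rw [Ne, Fin.one_eq_zero_iff]; omega
    exact h10 (add_eq_left.mp ((hoi _).mp h3))
  obtain ⟨m, hm, f, hf⟩ := exists_cycG_embedding_avoiding c hv h1 h2 h3 hj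
  refine hstar m hm ⟨addIsolatedEmbedding f o ?_ fun x => ?_⟩
  · rintro ⟨x, hx⟩
    rcases hf x with hxv | ⟨l, -, hxl⟩
    · exact hov (hx ▸ hxv)
    · exact hoc ⟨l, hxl ▸ hx⟩
  · rcases hf x with hxv | ⟨l, hli, hxl⟩
    · exact hxv ▸ fun h => hvo h.symm
    · exact hxl ▸ fun h => hli ((hoi l).mp h)

/-- Claim 2 of the paper: assuming no induced `4`-wheel, no induced
`C_m^*` (`m ≥ 4`), and that neighbors on `C` of vertices off `C` always induce a
chordless path, any vertex `v` off `C` adjacent to `v_{i-1}`, `v_i`, `v_{i+1}` is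
adjacent to every vertex `o ∈ O_i`. -/
theorem stmt13 {V : Type*} [Finite V] (G : SimpleGraph V)
    (h4w : ¬ HasInduced (wheelG 4) G)
    (hstar : ∀ m, 4 ≤ m → ¬ HasInduced (cycStar m) G)
    {n : ℕ} [NeZero n] (hn : 4 ≤ n) (c : cycG n ↪g G)
    (hpath : ∀ u ∉ Set.range ⇑c, (∃ j, G.Adj u (c j)) →
      ∃ m, ∃ p : pathG m ↪g G,
        Set.range ⇑p = {x | x ∈ Set.range ⇑c ∧ G.Adj u x})
    (i : Fin n) (v : V) (hv : v ∉ Set.range ⇑c)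
    (h1 : G.Adj v (c (i - 1))) (h2 : G.Adj v (c i)) (h3 : G.Adj v (c (i + 1)))
    (o : V) (ho : o ∈ Oset G ⇑c i) :
    G.Adj v o :=
  stmt13_general G hstar hn c hpath i v hv h1 h2 h3 o ho
end

section
/- Let A and B be cliques of an interval graph G such that G has an interval model where all intervals of vertices in A share the same left endpoint which is leftmost among all endpoints, and all intervals of vertices in B share the same right endpoint which is rightmost. Then: (a) every vertex of A ∪ B is an end vertex of G; (b) no two vertices both in A (or both in B) are the two internal vertices of an induced P_4 of G; and (c) for every a ∈ A and b ∈ B, there is no induced a,b-path in G together with a vertex adjacent to no vertex of the path. -/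
open SimpleGraph

/-- A vertex `v` is an end vertex of an interval graph: some interval model puts the
left endpoint of `v`'s interval leftmost among all endpoints. -/
def IsEndVertex {V : Type*} (G : SimpleGraph V) (v : V) : Prop :=
  ∃ M : V → ℝ × ℝ, IsIntervalModel G M ∧
    ∀ u, (M v).1 ≤ (M u).1 ∧ (M v).1 ≤ (M u).2

/-! Reflecting a model through `x ↦ -x` swaps left and right endpoints, so everything said
about `B` follows from the corresponding statement about `A`. The argument rests on one
observation: if two intervals are disjoint and the first starts no later than the second,
then the first ends before the second starts. Applied to the two non-edges of an induced
`P_4` whose internal vertices both start leftmost, it yields a cyclic chain of strict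
inequalities between endpoints. Propagated along an `a,b`-path that avoids the neighbourhood
of `z`, it puts every interval of the path strictly left of `z`, which is impossible once
the interval of `b` ends rightmost. -/

section

variable {V : Type*} {G : SimpleGraph V} {M : V → ℝ × ℝ}

theorem isIntervalModel_iff :
    IsIntervalModel G M ↔ (∀ v, (M v).1 ≤ (M v).2) ∧
      ∀ u v, u ≠ v → (G.Adj u v ↔ (M u).1 ≤ (M v).2 ∧ (M v).1 ≤ (M u).2) := by
  refine and_congr_right fun hle => forall₂_congr fun u v => imp_congr_right fun _ => ?_
  rw [Set.Icc_inter_Icc, Set.nonempty_Icc, max_le_iff, le_min_iff, le_min_iff]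
  have := hle u
  have := hle v
  constructor <;> intro h <;> simp_all

def mirrorModel (M : V → ℝ × ℝ) : V → ℝ × ℝ := fun v => (-(M v).2, -(M v).1)

theorem pathG_adj {m : ℕ} {i j : Fin m} :
    (pathG m).Adj i j ↔ i.val + 1 = j.val ∨ j.val + 1 = i.val := by
  rw [pathG, fromRel_adj, and_iff_right_iff_imp]
  rintro (h | h) rfl <;> omega

namespace IsIntervalModel

theorem adj_iff (hM : IsIntervalModel G M) {u v : V} (huv : u ≠ v) :
    G.Adj u v ↔ (M u).1 ≤ (M v).2 ∧ (M v).1 ≤ (M u).2 :=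
  (isIntervalModel_iff.1 hM).2 u v huv

theorem mirror (hM : IsIntervalModel G M) : IsIntervalModel G (mirrorModel M) := by
  refine isIntervalModel_iff.2 ⟨fun v => neg_le_neg (hM.1 v), fun u v huv => ?_⟩
  simp only [hM.adj_iff huv, mirrorModel, neg_le_neg_iff]
  exact and_comm

theorem isEndVertex_of_forall_fst_le (hM : IsIntervalModel G M) {v : V}
    (hv : ∀ u, (M v).1 ≤ (M u).1) : IsEndVertex G v :=
  ⟨M, hM, fun u => ⟨hv u, (hv u).trans (hM.1 u)⟩⟩

theorem isEndVertex_of_forall_snd_le (hM : IsIntervalModel G M) {v : V}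
    (hv : ∀ u, (M u).2 ≤ (M v).2) : IsEndVertex G v :=
  hM.mirror.isEndVertex_of_forall_fst_le fun u => neg_le_neg (hv u)

theorem snd_lt_fst_of_not_adj (hM : IsIntervalModel G M) {u v : V} (huv : u ≠ v)
    (hadj : ¬ G.Adj u v) (hle : (M u).1 ≤ (M v).1) : (M u).2 < (M v).1 := by
  by_contra! h
  exact hadj ((hM.adj_iff huv).2 ⟨hle.trans (hM.1 v), h⟩)

theorem not_fst_le_of_pathG_four (hM : IsIntervalModel G M) (f : pathG 4 ↪g G) :
    ¬ ((M (f 2)).1 ≤ (M (f 0)).1 ∧ (M (f 1)).1 ≤ (M (f 3)).1) := by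
  rintro ⟨h20, h13⟩
  have adj : ∀ i j : Fin 4, G.Adj (f i) (f j) ↔ i.val + 1 = j.val ∨ j.val + 1 = i.val :=
    fun i j => f.map_adj_iff.trans pathG_adj
  have h01 := ((hM.adj_iff (f.injective.ne (by decide))).1 ((adj 0 1).2 (by decide))).1
  have h23 := ((hM.adj_iff (f.injective.ne (by decide))).1 ((adj 2 3).2 (by decide))).2
  have h02 := hM.snd_lt_fst_of_not_adj (f.injective.ne (by decide)) (by simp [adj]) h20
  have h31 := hM.snd_lt_fst_of_not_adj (f.injective.ne (by decide)) (by simp [adj]) h13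
  linarith

theorem snd_lt_fst_of_pathG {m : ℕ} (hM : IsIntervalModel G M) (p : pathG m →g G) {z : V}
    (hz : z ∉ Set.range p) (hadj : ∀ j, ¬ G.Adj z (p j)) (hm : 0 < m)
    (h0 : (M (p ⟨0, hm⟩)).1 ≤ (M z).1) (j : Fin m) : (M (p j)).2 < (M z).1 := by
  have hfar : ∀ j, (M (p j)).1 ≤ (M z).1 → (M (p j)).2 < (M z).1 := fun j =>
    hM.snd_lt_fst_of_not_adj (fun h : p j = z => hz ⟨j, h⟩) fun h => hadj j h.symm
  obtain ⟨j, hj⟩ := j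
  induction j with
  | zero => exact hfar _ h0
  | succ j ih =>
    have hstep := p.map_adj (pathG_adj.2 (Or.inl rfl) : (pathG m).Adj ⟨j, by omega⟩ ⟨j + 1, hj⟩)
    exact hfar _ ((((hM.adj_iff hstep.ne).1 hstep).2).trans (ih (by omega)).le)

end IsIntervalModel

end

/-- necessity in the characterization of left-right pairs: if the
cliques `A`, `B` of an interval graph `G` admit an interval model in which all
intervals of `A` share a common, leftmost left endpoint and all intervals of `B`
share a common, rightmost right endpoint, then (a) every vertex of `A ∪ B` is an end
vertex, (b) no two vertices both in `A` (or both in `B`) are the internal vertices of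
an induced `P_4`, and (c) for `a ∈ A`, `b ∈ B` there is no induced `a,b`-path
together with a vertex adjacent to no vertex of the path. -/
theorem stmt16 {V : Type*} (G : SimpleGraph V) (M : V → ℝ × ℝ)
    (hM : IsIntervalModel G M) (A B : Set V)
    (hAmin : ∀ a ∈ A, ∀ u, (M a).1 ≤ (M u).1)
    (hBmax : ∀ b ∈ B, ∀ u, (M u).2 ≤ (M b).2) :
    (∀ v ∈ A ∪ B, IsEndVertex G v) ∧
    (¬ ∃ f : pathG 4 ↪g G,
        (f 1 ∈ A ∧ f 2 ∈ A) ∨ (f 1 ∈ B ∧ f 2 ∈ B)) ∧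
    (∀ a ∈ A, ∀ b ∈ B,
      ¬ ∃ m : ℕ, ∃ hm : 1 ≤ m, ∃ p : pathG m ↪g G,
        p ⟨0, by omega⟩ = a ∧ p ⟨m - 1, by omega⟩ = b ∧
        ∃ z, z ∉ Set.range ⇑p ∧ ∀ j, ¬ G.Adj z (p j)) := by
  refine ⟨?_, ?_, ?_⟩
  · rintro v (hv | hv)
    · exact hM.isEndVertex_of_forall_fst_le (hAmin v hv)
    · exact hM.isEndVertex_of_forall_snd_le (hBmax v hv)
  · rintro ⟨f, ⟨h1, h2⟩ | ⟨h1, h2⟩⟩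
    · exact hM.not_fst_le_of_pathG_four f ⟨hAmin _ h2 _, hAmin _ h1 _⟩
    · exact hM.mirror.not_fst_le_of_pathG_four f
        ⟨neg_le_neg (hBmax _ h2 _), neg_le_neg (hBmax _ h1 _)⟩
  · rintro a ha b hb ⟨m, hm, p, rfl, rfl, z, hz, hadj⟩
    have hpath : (M (p ⟨m - 1, by omega⟩)).2 < (M z).1 :=
      hM.snd_lt_fst_of_pathG p.toHom hz hadj (by omega) (hAmin _ ha z) _
    linarith [hBmax _ hb z, hM.1 z]
end
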